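/- Path decomposition after field assignment: let h be a heap, l a location in dom(h), and l' a value, and let h' = h[(l,f) ↦ l'] be h with field f of l updated to l'. Suppose ⟨ρ,h⟩π ⇓ l' (some path π reaches l' in the original heap). If ⟨ρ,h'⟩π' ⇓ v for some path π' and value v, then either ⟨ρ,h⟩π' ⇓ v already held in the original heap, or π' decomposes as π' = π_z.f.π₁.f.….f.π_n.f.π_f (n ≥ 0) where ⟨ρ,h⟩π_z ⇓ l, ⟨ρ,h⟩π.π_f ⇓ v, and ⟨ρ,h⟩π.π_i ⇓ l for each i ∈ {1,…,n}. -/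
import Mathlib


namespace SecureClones

abbrev Var := ℕ
abbrev Field := ℕ
abbrev Loc := ℕ
abbrev PolId := ℕ
abbrev Node := ℕ

/-- Values: locations or null. -/
inductive Val where
  | loc : Loc → Val
  | null : Val
deriving DecidableEq

abbrev Obj := Field → Val
abbrev Heap := Loc → Option Obj
abbrev Env := Var → Val

/-- An access path: a root variable followed by a sequence of fields. -/
structure Path where
  root : Var
  fields : List Field
deriving DecidableEq

/-- Evaluation of a sequence of field dereferences from a value. -/
def evalFields (h : Heap) : Val → List Field → Option Val
  | v, [] => some v
  | Val.loc l, f :: fs =>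
      match h l with
      | some o => evalFields h (o f) fs
      | none => none
  | Val.null, _ :: _ => none

/-- Concrete path evaluation ⟨ρ,h⟩π ⇓ v. -/
def EvalPath (ρ : Env) (h : Heap) (π : Path) (v : Val) : Prop :=
  evalFields h (ρ π.root) π.fields = some v

/-- Reachability in a heap: `Reach h v w` iff `w` is reachable from `v`
by a (possibly empty) sequence of field dereferences. -/
inductive Reach (h : Heap) : Val → Val → Prop
  | refl (v) : Reach h v v
  | step {v : Val} {l : Loc} {o : Obj} (f : Field) :
      Reach h v (Val.loc l) → h l = some o → Reach h v (o f)

/-- A copy policy: a set of (policy identifier, deep field) pairs. -/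
abbrev Pol := Set (PolId × Field)

/-- A field sequence follows only deep fields of a policy (w.r.t. policy map `Pm`). -/
inductive FieldsSat (Pm : PolId → Pol) : Pol → List Field → Prop
  | nil (τ) : FieldsSat Pm τ []
  | cons {τ : Pol} {fs : List Field} (X : PolId) (f : Field) :
      (X, f) ∈ τ → FieldsSat Pm (Pm X) fs → FieldsSat Pm τ (f :: fs)

/-- ⊢ π : τ : the access path follows only deep fields of τ. -/
def PathSat (Pm : PolId → Pol) (π : Path) (τ : Pol) : Prop :=
  FieldsSat Pm τ π.fields

/-- Policy semantics ρ,h,x ⊨ τ. -/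
def PolSem (Pm : PolId → Pol) (ρ : Env) (h : Heap) (x : Var) (τ : Pol) : Prop :=
  ∀ (π π' : Path) (l l' : Loc),
    π.root = x → π'.root ≠ x →
    PathSat Pm π τ →
    EvalPath ρ h π (Val.loc l) → EvalPath ρ h π' (Val.loc l') →
    l ≠ l'

/-- Base types of the type-and-effect system. -/
inductive BaseType where
  | node : Node → BaseType
  | bot
  | topOut
  | top
deriving DecidableEq

abbrev Graph := Node → Option (Field → BaseType)

/-- A type (Γ,Δ,Θ). -/
structure Ty where
  Γ : Var → BaseType
  Δ : Graph
  Θ : Set Node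

/-- Abstract evaluation of a field sequence from a base type, with ⊤, ⊤out as sinks. -/
def aevalFields (Δ : Graph) : BaseType → List Field → Option BaseType
  | t, [] => some t
  | BaseType.node n, f :: fs =>
      match Δ n with
      | some e => aevalFields Δ (e f) fs
      | none => none
  | BaseType.top, _ :: _ => some BaseType.top
  | BaseType.topOut, _ :: _ => some BaseType.topOut
  | BaseType.bot, _ :: _ => none

/-- Abstract path evaluation [Γ,Δ]π ⇓ t. -/
def AEval (Γ : Var → BaseType) (Δ : Graph) (π : Path) (t : BaseType) : Prop :=
  aevalFields Δ (Γ π.root) π.fields = some t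

/-- Auxiliary type interpretation [[v : t]]. -/
inductive AuxInterp (ρ : Env) (h : Heap) (A : Set Loc) (Γ : Var → BaseType) (Δ : Graph) :
    Val → BaseType → Prop
  | null (t) : AuxInterp ρ h A Γ Δ Val.null t
  | top (v) : AuxInterp ρ h A Γ Δ v BaseType.top
  | topOut (l : Loc) :
      (∀ l' : Loc, Reach h (Val.loc l) (Val.loc l') → l' ∉ A) →
      AuxInterp ρ h A Γ Δ (Val.loc l) BaseType.topOut
  | node (l : Loc) (n : Node) :
      l ∈ A → (Δ n).isSome →
      (∀ π, EvalPath ρ h π (Val.loc l) → AEval Γ Δ π (BaseType.node n)) →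
      AuxInterp ρ h A Γ Δ (Val.loc l) (BaseType.node n)

/-- Main type interpretation ρ,h,A ⊨ (Γ,Δ,Θ). -/
structure Interp (ρ : Env) (h : Heap) (A : Set Loc) (T : Ty) : Prop where
  paths : ∀ (π : Path) (t : BaseType) (v : Val),
    AEval T.Γ T.Δ π t → EvalPath ρ h π v → AuxInterp ρ h A T.Γ T.Δ v t
  strong : ∀ n ∈ T.Θ, ∀ (π π' : Path) (l l' : Loc),
    AEval T.Γ T.Δ π (BaseType.node n) → AEval T.Γ T.Δ π' (BaseType.node n) →
    EvalPath ρ h π (Val.loc l) → EvalPath ρ h π' (Val.loc l') → l = l'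

/-- Value sub-typing t ≤_σ t' (σ : Node → Option Node, none standing for ⊤). -/
inductive VSub (σ : Node → Option Node) : BaseType → BaseType → Prop
  | bot (t) : VSub σ BaseType.bot t
  | top {t : BaseType} : (∀ n, t ≠ BaseType.node n) → VSub σ t BaseType.top
  | topOut : VSub σ BaseType.topOut BaseType.topOut
  | node {n n' : Node} : σ n = some n' → VSub σ (BaseType.node n) (BaseType.node n')
  | nodeTop {n : Node} : σ n = none → VSub σ (BaseType.node n) BaseType.top

/-- T₁ ⊑ T₂ via the fusion map σ. -/
structure SubtypeVia (T₁ T₂ : Ty) (σ : Node → Option Node) : Prop where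
  st1 : ∀ n n', (T₁.Δ n).isSome → σ n = some n' → (T₂.Δ n').isSome
  st2 : ∀ (t₁ : BaseType) (π : Path), AEval T₁.Γ T₁.Δ π t₁ →
      ∃ t₂, VSub σ t₁ t₂ ∧ AEval T₂.Γ T₂.Δ π t₂
  st3 : ∀ n₂ ∈ T₂.Θ, ∃ n₁ ∈ T₁.Θ,
      ∀ n, ((T₁.Δ n).isSome ∧ σ n = some n₂) ↔ n = n₁

/-- The sub-typing relation T₁ ⊑ T₂. -/
def TySub (T₁ T₂ : Ty) : Prop := ∃ σ, SubtypeVia T₁ T₂ σ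

-- Successor base type of a policy node for field f: the node of the policy
-- governing f if f is deep, and ⊤ otherwise.
open Classical in
noncomputable def polEdge (τ : Pol) (f : Field) : BaseType :=
  if h : ∃ X, (X, f) ∈ τ then BaseType.node (h.choose + 1) else BaseType.top

/-- The graph part of Φ(τ): node 0 is the unfolded root n_τ, node X+1 is the
node n'_X of policy identifier X. -/
noncomputable def PhiGraph (Pm : PolId → Pol) (τ : Pol) : Graph :=
  fun n =>
    match n with
    | 0 => some (polEdge τ)
    | m + 1 => some (polEdge (Pm m))

/-- The root node n_τ of Φ(τ). -/
def PhiRoot : Node := 0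

/-- Heap update h[(l,f) ↦ v]. -/
def hupd (h : Heap) (l : Loc) (f : Field) (v : Val) : Heap :=
  fun l' => if l' = l then (h l).map (fun o => Function.update o f v) else h l'

/-- Graph update Δ[(n,f) ↦ t]. -/
def gupd (Δ : Graph) (n : Node) (f : Field) (t : BaseType) : Graph :=
  fun m => if m = n then (Δ n).map (fun e => Function.update e f t) else Δ m


theorem evalFields_append (h : Heap) (a b : List Field) :
    ∀ v, evalFields h v (a ++ b) = (evalFields h v a).bind (fun w => evalFields h w b) := by
  induction a with
  | nil => intro v; simp [evalFields]
  | cons g gs ih =>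
    intro v
    cases v with
    | null => simp [evalFields]
    | loc m =>
      simp only [List.cons_append, evalFields]
      cases h m with
      | none => simp
      | some o => exact ih (o g)

theorem decomp_aux (h : Heap) (l : Loc) (l' : Val) (f : Field) :
    ∀ (fs : List Field) (v0 v : Val), evalFields (hupd h l f l') v0 fs = some v →
      evalFields h v0 fs = some v ∨
      ∃ (pz : List Field) (segs : List (List Field)) (pf : List Field), fs = pz ++ [f] ++ (segs.map (fun s => s ++ [f])).flatten ++ pf ∧
        evalFields h v0 pz = some (Val.loc l) ∧
        evalFields h l' pf = some v ∧
        ∀ s ∈ segs, evalFields h l' s = some (Val.loc l) := by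
  intro fs
  induction fs with
  | nil => intro v0 v hv; left; simpa [evalFields] using hv
  | cons g rest ih =>
    intro v0 v hv
    cases v0 with
    | null => simp [evalFields] at hv
    | loc m =>
      by_cases hm : m = l
      · subst hm
        cases hl : h m with
        | none => simp [evalFields, hupd, hl] at hv
        | some o =>
          by_cases hg : g = f
          · subst hg
            have hv' : evalFields (hupd h m g l') l' rest = some v := by
              simpa [evalFields, hupd, hl] using hv
            rcases ih l' v hv' with h1 | ⟨pz, segs, pf, hfs, hz, hpf, hsegs⟩
            · right
              refine ⟨[], [], rest, by simp, by simp [evalFields], h1, by simp⟩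
            · right
              refine ⟨[], pz :: segs, pf, ?_, by simp [evalFields], hpf, ?_⟩
              · simp [hfs]
              · intro s hs
                rcases List.mem_cons.mp hs with rfl | hs
                · exact hz
                · exact hsegs s hs
          · have hv' : evalFields (hupd h m f l') (o g) rest = some v := by
              simpa [evalFields, hupd, hl, Function.update, hg] using hv
            rcases ih (o g) v hv' with h1 | ⟨pz, segs, pf, hfs, hz, hpf, hsegs⟩
            · left; simpa [evalFields, hl] using h1
            · right
              exact ⟨g :: pz, segs, pf, by simp [hfs],
                by simpa [evalFields, hl] using hz, hpf, hsegs⟩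
      · cases hl : h m with
        | none => simp [evalFields, hupd, hm, hl] at hv
        | some o =>
          have hv' : evalFields (hupd h l f l') (o g) rest = some v := by
            simpa [evalFields, hupd, hm, hl] using hv
          rcases ih (o g) v hv' with h1 | ⟨pz, segs, pf, hfs, hz, hpf, hsegs⟩
          · left; simpa [evalFields, hl] using h1
          · right
            exact ⟨g :: pz, segs, pf, by simp [hfs],
              by simpa [evalFields, hl] using hz, hpf, hsegs⟩

/-- Path decomposition on assigned states. -/
theorem path_decomposition_assign (ρ : Env) (h : Heap) (l : Loc) (l' : Val) (f : Field)
    (hdom : (h l).isSome) (π π' : Path) (v : Val)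
    (hπ : EvalPath ρ h π l')
    (hπ' : EvalPath ρ (hupd h l f l') π' v) :
    EvalPath ρ h π' v ∨
    ∃ (pz : List Field) (segs : List (List Field)) (pf : List Field),
      π'.fields = pz ++ [f] ++ (segs.map (fun s => s ++ [f])).flatten ++ pf ∧
      EvalPath ρ h ⟨π'.root, pz⟩ (Val.loc l) ∧
      EvalPath ρ h ⟨π.root, π.fields ++ pf⟩ v ∧
      (∀ s ∈ segs, EvalPath ρ h ⟨π.root, π.fields ++ s⟩ (Val.loc l)) := by
  rcases decomp_aux h l l' f π'.fields (ρ π'.root) v hπ' with h1 | ⟨pz, segs, pf, hfs, hz, hpf, hsegs⟩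
  · exact Or.inl h1
  · right
    refine ⟨pz, segs, pf, hfs, hz, ?_, ?_⟩
    · show evalFields h (ρ π.root) (π.fields ++ pf) = some v
      rw [evalFields_append, hπ]
      exact hpf
    · intro s hs
      show evalFields h (ρ π.root) (π.fields ++ s) = some (Val.loc l)
      rw [evalFields_append, hπ]
      exact hsegs s hs

end SecureClones
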